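/- Let G = (V,E) be a finite simple graph and let u, v, s, t ∈ V be distinct vertices such that uv ∈ E, st ∈ E, and the subgraph of G induced on {u,v,s,t} has exactly two edges (so there are no edges between {u,v} and {s,t}). Then there exists a set E' ⊆ E with |E'| ≤ deg(u) + deg(v) + deg(s) + deg(t) − 2 and γ(G − E') = γ(G) + 2; consequently Sb₂(G) ≤ deg(u) + deg(v) + deg(s) + deg(t) − 2. -/

import Mathlib

/-- A finite set of vertices `D` is a dominating set of `G` if every vertex
is in `D` or adjacent to a vertex in `D`. -/
def SimpleGraph.IsDominatingSet {V : Type*} (G : SimpleGraph V) (D : Finset V) : Prop :=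
  ∀ v : V, v ∈ D ∨ ∃ u ∈ D, G.Adj u v

/-- The domination number of `G`: the minimum cardinality of a dominating set. -/
noncomputable def SimpleGraph.domNum {V : Type*} (G : SimpleGraph V) : ℕ :=
  sInf {n : ℕ | ∃ D : Finset V, G.IsDominatingSet D ∧ D.card = n}

/-- The `k`-synchronous bondage number of `G`: the minimum cardinality of a set of edges
whose deletion increases the domination number by exactly `k`.  (`Sb 1` is the classical
bondage number.) -/
noncomputable def SimpleGraph.synchBondage {V : Type*} (G : SimpleGraph V) (k : ℕ) : ℕ :=
  sInf {m : ℕ | ∃ E' : Finset (Sym2 V), ↑E' ⊆ G.edgeSet ∧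
    (G.deleteEdges ↑E').domNum = G.domNum + k ∧ E'.card = m}

/-! Delete every edge at `u`, `v`, `s`, `t`: at most `deg u + deg v + deg s + deg t - 2` edges,
since `uv` and `st` are each counted twice. The four vertices become isolated, so every
dominating set `D` of the new graph contains them, and `D \ {v, t}` still dominates `G`
through the edges `uv` and `st`; hence the domination number grows by at least two. Deleting
one edge raises it by at most one, so deleting the edges one at a time it passes through
exactly `γ(G) + 2` along the way. -/

open Finset

namespace SimpleGraph

variable {V : Type*}

section Incidence

variable (G : SimpleGraph V)

lemma card_incidenceFinset_union_add_one_of_adj [Fintype V] [DecidableRel G.Adj] [DecidableEq V]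
    {a b : V} (h : G.Adj a b) :
    #(G.incidenceFinset a ∪ G.incidenceFinset b) + 1 = G.degree a + G.degree b := by
  have hinter : G.incidenceFinset a ∩ G.incidenceFinset b = {s(a, b)} := by
    rw [← coe_inj, coe_inter, coe_incidenceFinset, coe_incidenceFinset, coe_singleton]
    exact G.incidenceSet_inter_incidenceSet_of_adj h
  rw [← card_incidenceFinset_eq_degree, ← card_incidenceFinset_eq_degree,
    ← card_union_add_card_inter, hinter, card_singleton]

lemma not_adj_deleteEdges_of_incidenceSet_subset {S : Set (Sym2 V)} {x : V}
    (h : G.incidenceSet x ⊆ S) (w : V) : ¬ (G.deleteEdges S).Adj x w := fun hxw =>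
  (deleteEdges_adj.1 hxw).2 (h ⟨(deleteEdges_adj.1 hxw).1, Sym2.mem_mk_left x w⟩)

end Incidence

namespace IsDominatingSet

variable {G H : SimpleGraph V} {D : Finset V}

lemma mem_of_forall_not_adj (hD : H.IsDominatingSet D) {x : V} (hx : ∀ w, ¬ H.Adj x w) :
    x ∈ D :=
  (hD x).resolve_right fun ⟨d, _, hdx⟩ => hx d hdx.symm

lemma sdiff_of_le [DecidableEq V] (hHG : H ≤ G) (hD : H.IsDominatingSet D) {X : Finset V}
    (hX : ∀ x ∈ X, ∀ w, ¬ H.Adj x w) (hXD : ∀ x ∈ X, ∃ d ∈ D \ X, G.Adj d x) :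
    G.IsDominatingSet (D \ X) := by
  intro w
  by_cases hw : w ∈ X
  · exact Or.inr (hXD w hw)
  rcases hD w with hwD | ⟨d, hdD, hdw⟩
  · exact Or.inl (mem_sdiff.2 ⟨hwD, hw⟩)
  · exact Or.inr ⟨d, mem_sdiff.2 ⟨hdD, fun hdX => hX d hdX w hdw⟩, hHG hdw⟩

/-- The deleted edge `ab` is only needed to dominate an endpoint that lies outside `D`. -/
lemma deleteEdges_singleton (hD : G.IsDominatingSet D) {D' : Finset V} (hDD' : D ⊆ D')
    {a b : V} (hab : a ∈ D → b ∈ D') (hba : b ∈ D → a ∈ D') :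
    (G.deleteEdges {s(a, b)}).IsDominatingSet D' := by
  intro w
  rcases hD w with hw | ⟨d, hd, hdw⟩
  · exact Or.inl (hDD' hw)
  by_cases he : s(d, w) = s(a, b)
  · rcases Sym2.eq_iff.1 he with ⟨rfl, rfl⟩ | ⟨rfl, rfl⟩
    exacts [Or.inl (hab hd), Or.inl (hba hd)]
  · exact Or.inr ⟨d, hDD' hd, deleteEdges_adj.2 ⟨hdw, he⟩⟩

end IsDominatingSet

lemma domNum_le_card {G : SimpleGraph V} {D : Finset V} (hD : G.IsDominatingSet D) :
    G.domNum ≤ #D :=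
  Nat.sInf_le ⟨D, hD, rfl⟩

lemma synchBondage_le_card {G : SimpleGraph V} {k : ℕ} {E' : Finset (Sym2 V)}
    (hE' : ↑E' ⊆ G.edgeSet) (hdom : (G.deleteEdges ↑E').domNum = G.domNum + k) :
    G.synchBondage k ≤ #E' :=
  Nat.sInf_le ⟨E', hE', hdom, rfl⟩

section Finite

variable [Fintype V]

lemma exists_isDominatingSet_card_eq_domNum (G : SimpleGraph V) :
    ∃ D : Finset V, G.IsDominatingSet D ∧ #D = G.domNum :=
  Nat.sInf_mem (s := {n | ∃ D : Finset V, G.IsDominatingSet D ∧ #D = n})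
    ⟨_, univ, fun v => Or.inl (mem_univ v), rfl⟩

lemma domNum_deleteEdges_singleton_le (G : SimpleGraph V) (e : Sym2 V) :
    (G.deleteEdges {e}).domNum ≤ G.domNum + 1 := by
  classical
  induction e using Sym2.ind with
  | _ a b =>
  obtain ⟨D, hD, hcard⟩ := G.exists_isDominatingSet_card_eq_domNum
  have hdom := hD.deleteEdges_singleton (a := a) (b := b)
    (D' := insert (if a ∈ D then b else a) D) (subset_insert _ _) (fun ha => by simp [ha])
    (fun hb => by by_cases ha : a ∈ D <;> simp [ha])
  calc (G.deleteEdges {s(a, b)}).domNum ≤ #(insert (if a ∈ D then b else a) D) :=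
        domNum_le_card hdom
    _ ≤ #D + 1 := card_insert_le _ _
    _ = G.domNum + 1 := by rw [hcard]

lemma exists_subset_domNum_deleteEdges_eq (G : SimpleGraph V) (k : ℕ) (S : Finset (Sym2 V))
    (h : G.domNum + k ≤ (G.deleteEdges ↑S).domNum) :
    ∃ T ⊆ S, (G.deleteEdges ↑T).domNum = G.domNum + k := by
  classical
  induction S using Finset.induction_on with
  | empty =>
    rw [coe_empty, deleteEdges_empty] at h
    exact ⟨∅, subset_refl _, by rw [coe_empty, deleteEdges_empty]; omega⟩
  | insert e S _ ih =>
    by_cases hS : G.domNum + k ≤ (G.deleteEdges ↑S).domNum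
    · obtain ⟨T, hTS, hT⟩ := ih hS
      exact ⟨T, hTS.trans (subset_insert _ _), hT⟩
    · refine ⟨insert e S, subset_refl _, le_antisymm ?_ h⟩
      have hstep := domNum_deleteEdges_singleton_le (G.deleteEdges ↑S) e
      rw [deleteEdges_deleteEdges, Set.union_comm, ← Set.insert_eq, ← coe_insert] at hstep
      omega

lemma domNum_add_two_le_of_le {G H : SimpleGraph V} (hHG : H ≤ G) {u v s t : V}
    (huv : u ≠ v) (hut : u ≠ t) (hvs : v ≠ s) (hvt : v ≠ t) (hst : s ≠ t)
    (hadj1 : G.Adj u v) (hadj2 : G.Adj s t)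
    (hiso : ∀ x ∈ ({u, v, s, t} : Set V), ∀ w, ¬ H.Adj x w) :
    G.domNum + 2 ≤ H.domNum := by
  classical
  obtain ⟨D, hD, hcard⟩ := H.exists_isDominatingSet_card_eq_domNum
  have hmem : ∀ x ∈ ({u, v, s, t} : Set V), x ∈ D := fun x hx =>
    hD.mem_of_forall_not_adj (hiso x hx)
  have hvtD : {v, t} ⊆ D :=
    insert_subset (hmem v (by simp)) (singleton_subset_iff.2 (hmem t (by simp)))
  have hX : ∀ x ∈ ({v, t} : Finset V), ∀ w, ¬ H.Adj x w := by
    simp only [mem_insert, mem_singleton, forall_eq_or_imp, forall_eq]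
    exact ⟨hiso v (by simp), hiso t (by simp)⟩
  have hG : G.IsDominatingSet (D \ {v, t}) := by
    refine hD.sdiff_of_le hHG hX ?_
    simp only [mem_insert, mem_singleton, forall_eq_or_imp, forall_eq, mem_sdiff, not_or]
    exact ⟨⟨u, ⟨hmem u (by simp), huv, hut⟩, hadj1⟩,
      ⟨s, ⟨hmem s (by simp), hvs.symm, hst⟩, hadj2⟩⟩
  have hDcard : #(D \ {v, t}) + 2 = #D := by
    have hle := card_le_card hvtD
    rw [card_pair hvt] at hle
    rw [card_sdiff_of_subset hvtD, card_pair hvt]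
    omega
  calc G.domNum + 2 ≤ #(D \ {v, t}) + 2 := by grw [domNum_le_card hG]
    _ = H.domNum := by rw [hDcard, hcard]

end Finite

end SimpleGraph

theorem synchBondage_two_le_of_two_disjoint_edges_general {V : Type*} [Fintype V]
    (G : SimpleGraph V) [DecidableRel G.Adj] (u v s t : V)
    (huv : u ≠ v) (hut : u ≠ t) (hvs : v ≠ s) (hvt : v ≠ t) (hst : s ≠ t)
    (hadj1 : G.Adj u v) (hadj2 : G.Adj s t) :
    (∃ E' : Finset (Sym2 V), ↑E' ⊆ G.edgeSet ∧
      E'.card ≤ G.degree u + G.degree v + G.degree s + G.degree t - 2 ∧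
      (G.deleteEdges ↑E').domNum = G.domNum + 2) ∧
    G.synchBondage 2 ≤ G.degree u + G.degree v + G.degree s + G.degree t - 2 := by
  classical
  set F :=
    (G.incidenceFinset u ∪ G.incidenceFinset v) ∪ (G.incidenceFinset s ∪ G.incidenceFinset t)
  have hFG : ↑F ⊆ G.edgeSet := by
    simp only [F, coe_union, SimpleGraph.coe_incidenceFinset, Set.union_subset_iff]
    exact ⟨⟨G.incidenceSet_subset u, G.incidenceSet_subset v⟩,
      G.incidenceSet_subset s, G.incidenceSet_subset t⟩
  have hFcard : #F ≤ G.degree u + G.degree v + G.degree s + G.degree t - 2 := by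
    have hcard_uv := G.card_incidenceFinset_union_add_one_of_adj hadj1
    have hcard_st := G.card_incidenceFinset_union_add_one_of_adj hadj2
    exact (card_union_le _ _).trans (by omega)
  have hiso : ∀ x ∈ ({u, v, s, t} : Set V), ∀ w, ¬ (G.deleteEdges ↑F).Adj x w := by
    refine fun x hx => G.not_adj_deleteEdges_of_incidenceSet_subset fun e he => ?_
    rcases hx with rfl | rfl | rfl | rfl <;> simp [F, he]
  obtain ⟨T, hTF, hT⟩ := G.exists_subset_domNum_deleteEdges_eq 2 F
    (SimpleGraph.domNum_add_two_le_of_le (SimpleGraph.deleteEdges_le _) huv hut hvs hvt hst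
      hadj1 hadj2 hiso)
  have hTcard := (card_le_card hTF).trans hFcard
  have hTG : ↑T ⊆ G.edgeSet := (coe_subset.2 hTF).trans hFG
  exact ⟨⟨T, hTG, hTcard, hT⟩,
    (SimpleGraph.synchBondage_le_card hTG hT).trans hTcard⟩

/-- if `uv` and `st` are edges and the subgraph induced on `{u,v,s,t}` has
exactly two edges, then `Sb₂(G) ≤ deg u + deg v + deg s + deg t − 2`; moreover such a
2-synchronous bondage set of at most this size exists. -/
theorem synchBondage_two_le_of_two_disjoint_edges {V : Type*} [Fintype V] [DecidableEq V]
    (G : SimpleGraph V) [DecidableRel G.Adj] (u v s t : V)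
    (huv : u ≠ v) (hus : u ≠ s) (hut : u ≠ t) (hvs : v ≠ s) (hvt : v ≠ t) (hst : s ≠ t)
    (hadj1 : G.Adj u v) (hadj2 : G.Adj s t)
    (hinduced : {e ∈ G.edgeSet | ∀ x ∈ e, x ∈ ({u, v, s, t} : Set V)}.ncard = 2) :
    (∃ E' : Finset (Sym2 V), ↑E' ⊆ G.edgeSet ∧
      E'.card ≤ G.degree u + G.degree v + G.degree s + G.degree t - 2 ∧
      (G.deleteEdges ↑E').domNum = G.domNum + 2) ∧
    G.synchBondage 2 ≤ G.degree u + G.degree v + G.degree s + G.degree t - 2 :=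
  synchBondage_two_le_of_two_disjoint_edges_general G u v s t huv hut hvs hvt hst hadj1 hadj2
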